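/- arXiv:2405.13439 — 8 statements merged into one kernel-verified Lean document; each statement's English description precedes it below -/
import Mathlib

section
/- For all integers 0 ≤ k ≤ n, the unsigned Stirling number of the first kind satisfies the inequality [n choose-bracket n−k] · ((n−k)!/n!)² ≤ 1/k!. -/
/-!
Clearing denominators, the claim reads `[n, j] · k! · j!² ≤ n!²` for `n = j + k`. This follows by
induction from the recurrence `[n+1, j+1] = [n, j] + n [n, j+1]`: the two terms contribute at most
`(j+1)² n!²` and `n (k+1) n!²`, and `(j+1)² + n (k+1) ≤ (n+1)²`.
-/

open Polynomial

/-- Unsigned Stirling numbers of the first kind, defined as coefficients of the rising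
factorial: `x (x+1) ⋯ (x+n-1) = ∑ k, stirling1 n k * x^k`. -/
noncomputable def stirling1 (n k : ℕ) : ℕ := (ascPochhammer ℕ n).coeff k

open Nat

lemma stirling1_self (n : ℕ) : stirling1 n n = 1 := by
  simpa [stirling1, ascPochhammer_natDegree] using (monic_ascPochhammer ℕ n).coeff_natDegree

lemma stirling1_succ_zero (n : ℕ) : stirling1 (n + 1) 0 = 0 := by
  simp [stirling1, coeff_zero_eq_eval_zero]

lemma stirling1_succ_succ (n j : ℕ) :
    stirling1 (n + 1) (j + 1) = stirling1 n j + n * stirling1 n (j + 1) := by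
  rw [stirling1, ascPochhammer_succ_right, mul_add, coeff_add, coeff_mul_X, ← C_eq_natCast,
    coeff_mul_C, mul_comm]
  rfl

lemma stirling1_add_mul_factorial_mul_sq_le (j k : ℕ) :
    stirling1 (j + k) j * k ! * j ! ^ 2 ≤ (j + k)! ^ 2 := by
  induction j generalizing k with
  | zero =>
    cases k with
    | zero => simp [stirling1_self]
    | succ k => simp [stirling1_succ_zero]
  | succ j ihj =>
    induction k with
    | zero => simp [stirling1_self]
    | succ k ihk =>
      set n := j + k + 1
      have hn : j + 1 + (k + 1) = n + 1 := by omega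
      have h₁ : stirling1 n j * (k + 1)! * j ! ^ 2 ≤ n ! ^ 2 := by
        simpa [n, add_assoc] using ihj (k + 1)
      have h₂ : stirling1 n (j + 1) * k ! * (j + 1)! ^ 2 ≤ n ! ^ 2 := by
        simpa [n, add_right_comm j 1 k] using ihk
      have hsq : (j + 1) ^ 2 + n * (k + 1) ≤ (n + 1) ^ 2 := by nlinarith
      rw [hn, stirling1_succ_succ]
      calc (stirling1 n j + n * stirling1 n (j + 1)) * (k + 1)! * (j + 1)! ^ 2
          = stirling1 n j * (k + 1)! * j ! ^ 2 * (j + 1) ^ 2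
            + n * (k + 1) * (stirling1 n (j + 1) * k ! * (j + 1)! ^ 2) := by
            simp only [factorial_succ]; ring
        _ ≤ n ! ^ 2 * (j + 1) ^ 2 + n * (k + 1) * n ! ^ 2 := by gcongr
        _ = n ! ^ 2 * ((j + 1) ^ 2 + n * (k + 1)) := by ring
        _ ≤ n ! ^ 2 * (n + 1) ^ 2 := by gcongr
        _ = (n + 1)! ^ 2 := by rw [factorial_succ n]; ring

theorem stmt_2 (n k : ℕ) (hk : k ≤ n) :
    (stirling1 n (n - k) : ℝ) * ((Nat.factorial (n - k) : ℝ) / Nat.factorial n) ^ 2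
      ≤ 1 / Nat.factorial k := by
  obtain ⟨j, rfl⟩ := Nat.exists_eq_add_of_le' hk
  have h : (stirling1 (j + k) j * k ! * j ! ^ 2 : ℝ) ≤ (j + k)! ^ 2 := by
    exact_mod_cast stirling1_add_mul_factorial_mul_sq_le j k
  rw [Nat.add_sub_cancel, div_pow, mul_div_assoc', div_le_div_iff₀ (by positivity)
    (by positivity)]
  linarith
end

section
/- For each fixed integer k ≥ 0, the sequence [n brack n−k] · ((n−k)!/n!)² converges to 1/(2^k k!) as n → ∞. -/
/-!
Writing `C(m) = m.choose 2`, the recurrence `[n+1, n-j] = n [n, n-j] + [n, n-j-1]` together with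
`C(m+1) = C(m) + m` and the two first-order estimates `a^(j+1) + (j+1) b a^j ≤ (a+b)^(j+1) ≤
a^(j+1) + (j+1) b (a+b)^j` gives, by induction on `n`, the sandwich
`C(n-k)^k ≤ k! [n, n-k] ≤ C(n)^k`. Since `n! / (n-k)!` is the falling factorial `n^(k)`, both
`C(n-k)^k / (n^(k))^2` and `C(n)^k / (n^(k))^2` are `2^-k` times a quotient of two monic
polynomials of degree `2k` evaluated at `n`, so they tend to `2^-k`.
-/

open Polynomial Filter

open Finset Nat Topology

theorem stirling1_eq_stirlingFirst (n k : ℕ) : stirling1 n k = stirlingFirst n k := by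
  induction n generalizing k with
  | zero => cases k <;> simp [stirling1, coeff_one]
  | succ n ih =>
    cases k with
    | zero => simp [stirling1, ascPochhammer_succ_left]
    | succ k =>
      rw [stirlingFirst_succ_succ, ← ih, ← ih, stirling1, ascPochhammer_succ_right, mul_add,
        coeff_add, coeff_mul_X, ← C_eq_natCast, coeff_mul_C, add_comm, mul_comm]
      rfl

section BernoulliBounds

variable {R : Type*} [CommSemiring R] [PartialOrder R] [IsOrderedRing R] {a b : R}

theorem pow_succ_add_mul_pow_le_add_pow_succ (ha : 0 ≤ a) (hb : 0 ≤ b) (m : ℕ) :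
    a ^ (m + 1) + (m + 1) * b * a ^ m ≤ (a + b) ^ (m + 1) := by
  have h := geom_sum₂_mul_add b a (m + 1)
  rw [add_comm b a] at h
  rw [← h, add_comm (_ * b)]
  gcongr a ^ (m + 1) + ?_
  calc (m + 1) * b * a ^ m = (∑ _i ∈ range (m + 1), a ^ m) * b := by
        rw [sum_const, card_range, nsmul_eq_mul]; push_cast; ring
    _ ≤ _ := by
      gcongr with i hi
      rw [mem_range] at hi
      calc a ^ m = a ^ i * a ^ (m + 1 - 1 - i) := by rw [← pow_add]; congr 1; omega
        _ ≤ _ := by gcongr; exact le_add_of_nonneg_right hb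

theorem add_pow_succ_le_pow_succ_add_mul_add_pow (ha : 0 ≤ a) (hb : 0 ≤ b) (m : ℕ) :
    (a + b) ^ (m + 1) ≤ a ^ (m + 1) + (m + 1) * b * (a + b) ^ m := by
  have h := geom_sum₂_mul_add b a (m + 1)
  rw [add_comm b a] at h
  rw [← h, add_comm (_ * b)]
  gcongr a ^ (m + 1) + ?_
  calc (∑ i ∈ range (m + 1), (a + b) ^ i * a ^ (m + 1 - 1 - i)) * b
      ≤ (∑ _i ∈ range (m + 1), (a + b) ^ m) * b := by
        gcongr with i hi
        rw [mem_range] at hi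
        calc (a + b) ^ i * a ^ (m + 1 - 1 - i) ≤ (a + b) ^ i * (a + b) ^ (m + 1 - 1 - i) := by
              gcongr; exact le_add_of_nonneg_right hb
          _ = _ := by rw [← pow_add]; congr 1; omega
    _ = (m + 1) * b * (a + b) ^ m := by
        rw [sum_const, card_range, nsmul_eq_mul]; push_cast; ring

end BernoulliBounds

namespace Nat

theorem add_one_choose_two (n : ℕ) : (n + 1).choose 2 = n.choose 2 + n := by
  rw [choose_succ_succ', choose_one_right, add_comm]

theorem stirlingFirst_add_one_sub {n j : ℕ} (h : j < n) :
    stirlingFirst (n + 1) (n - j) = n * stirlingFirst n (n - j) + stirlingFirst n (n - (j + 1)) := by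
  rw [show n - j = n - (j + 1) + 1 by omega, stirlingFirst_succ_succ]

theorem factorial_mul_stirlingFirst_sub_le (n k : ℕ) (hk : k ≤ n) :
    k ! * stirlingFirst n (n - k) ≤ n.choose 2 ^ k := by
  induction n generalizing k with
  | zero => simp [Nat.le_zero.mp hk]
  | succ n ih =>
    rcases k with _ | j
    · simp [stirlingFirst_self]
    rcases (show j = n ∨ j < n by omega) with rfl | hj
    · simp
    rw [succ_sub_succ, stirlingFirst_add_one_sub hj, add_one_choose_two]
    calc (j + 1)! * (n * stirlingFirst n (n - j) + stirlingFirst n (n - (j + 1)))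
        = (j + 1)! * stirlingFirst n (n - (j + 1)) +
            (j + 1) * n * (j ! * stirlingFirst n (n - j)) := by
          rw [factorial_succ]; ring
      _ ≤ n.choose 2 ^ (j + 1) + (j + 1) * n * n.choose 2 ^ j := by
          gcongr
          · exact ih _ hj
          · exact ih _ hj.le
      _ ≤ (n.choose 2 + n) ^ (j + 1) :=
          mod_cast pow_succ_add_mul_pow_le_add_pow_succ (zero_le _) (zero_le _) j

theorem choose_two_sub_pow_le_factorial_mul_stirlingFirst (n k : ℕ) :
    (n - k).choose 2 ^ k ≤ k ! * stirlingFirst n (n - k) := by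
  induction n generalizing k with
  | zero => cases k <;> simp
  | succ n ih =>
    rcases k with _ | j
    · simp [stirlingFirst_self]
    rcases (show n ≤ j ∨ j < n by omega) with hj | hj
    · simp [show n - j = 0 by omega]
    obtain ⟨p, hp⟩ : ∃ p, n - j = p + 1 := ⟨n - (j + 1), by omega⟩
    have hp' : n - (j + 1) = p := by omega
    rw [succ_sub_succ, stirlingFirst_add_one_sub hj]
    calc (n - j).choose 2 ^ (j + 1) = (p.choose 2 + p) ^ (j + 1) := by rw [hp, add_one_choose_two]
      _ ≤ p.choose 2 ^ (j + 1) + (j + 1) * p * (p.choose 2 + p) ^ j :=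
          mod_cast add_pow_succ_le_pow_succ_add_mul_add_pow (zero_le _) (zero_le _) j
      _ ≤ (j + 1)! * stirlingFirst n (n - (j + 1)) +
            (j + 1) * n * (j ! * stirlingFirst n (n - j)) := by
          gcongr
          · exact hp' ▸ ih (j + 1)
          · omega
          · rw [← add_one_choose_two, ← hp]; exact ih j
      _ = (j + 1)! * (n * stirlingFirst n (n - j) + stirlingFirst n (n - (j + 1))) := by
          rw [factorial_succ]; ring

theorem cast_factorial_sub_div_factorial {K : Type*} [Field K] [CharZero K] {n k : ℕ}
    (h : k ≤ n) : ((n - k)! / n ! : K) = (n.descFactorial k : K)⁻¹ := by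
  rw [← factorial_mul_descFactorial h, cast_mul, div_mul_cancel_left₀ (by simp [factorial_ne_zero])]

end Nat

namespace Polynomial

theorem tendsto_eval_div_eval_natCast_of_monic {P Q : ℝ[X]} (hP : P.Monic) (hQ : Q.Monic)
    (hdeg : P.natDegree = Q.natDegree) :
    Tendsto (fun n : ℕ => P.eval (n : ℝ) / Q.eval (n : ℝ)) atTop (𝓝 1) := by
  have h := div_tendsto_atTop_leadingCoeff_div_of_degree_eq P Q
    (by rw [degree_eq_natDegree hP.ne_zero, degree_eq_natDegree hQ.ne_zero, hdeg])
  rw [hP.leadingCoeff, hQ.leadingCoeff, div_one] at h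
  exact h.comp tendsto_natCast_atTop_atTop

theorem eval_natCast_X_mul_X_sub_one_pow {K : Type*} [Field K] [CharZero K] (m k : ℕ) :
    ((X * (X - 1)) ^ k : K[X]).eval (m : K) = 2 ^ k * (m.choose 2 : K) ^ k := by
  rw [eval_pow, eval_mul, eval_sub, eval_X, eval_one, Nat.cast_choose_two, ← mul_pow]
  ring

end Polynomial

theorem tendsto_choose_two_sub_pow_div_descFactorial_sq (j k : ℕ) :
    Tendsto (fun n : ℕ => ((n - j).choose 2 : ℝ) ^ k / (n.descFactorial k : ℝ) ^ 2) atTop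
      (𝓝 (1 / 2 ^ k)) := by
  set P : ℝ[X] := ((X * (X - 1) : ℝ[X]) ^ k).comp (X - C (j : ℝ))
  set Q : ℝ[X] := descPochhammer ℝ k ^ 2
  have hP : P.Monic := ((monic_X.mul (monic_X_sub_C 1)).pow k).comp_X_sub_C _
  have hQ : Q.Monic := (monic_descPochhammer ℝ k).pow 2
  have hdeg : P.natDegree = Q.natDegree := by
    have h2 : (X * (X - 1) : ℝ[X]).natDegree = 2 := by compute_degree!
    rw [natDegree_comp, natDegree_X_sub_C, natDegree_pow, natDegree_pow, h2,
      descPochhammer_natDegree, mul_one, mul_comm]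
  have h := (tendsto_eval_div_eval_natCast_of_monic hP hQ hdeg).const_mul (1 / 2 ^ k : ℝ)
  rw [mul_one] at h
  refine h.congr' ?_
  filter_upwards [eventually_ge_atTop j] with n hn
  rw [eval_comp, eval_sub, eval_X, eval_C, ← Nat.cast_sub hn, eval_natCast_X_mul_X_sub_one_pow,
    eval_pow, descPochhammer_eval_eq_descFactorial]
  field_simp

theorem stmt_3 (k : ℕ) :
    Tendsto (fun n : ℕ =>
        (stirling1 n (n - k) : ℝ) * ((Nat.factorial (n - k) : ℝ) / Nat.factorial n) ^ 2)
      atTop (nhds (1 / (2 ^ k * Nat.factorial k))) := by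
  have hlim (j : ℕ) := (tendsto_choose_two_sub_pow_div_descFactorial_sq j k).div_const (k ! : ℝ)
  have hscale (x y : ℝ) : x * y⁻¹ = k ! * x / y / k ! := by field_simp
  rw [← div_div]
  refine tendsto_of_tendsto_of_tendsto_of_le_of_le' (hlim k) (by simpa using hlim 0) ?_ ?_ <;>
    filter_upwards [eventually_ge_atTop k] with n hn <;>
    rw [stirling1_eq_stirlingFirst, cast_factorial_sub_div_factorial hn, inv_pow, hscale] <;>
    gcongr
  · exact_mod_cast choose_two_sub_pow_le_factorial_mul_stirlingFirst n k
  · exact_mod_cast factorial_mul_stirlingFirst_sub_le n k hn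
end

section
/- The Legendre transform I(x) = sup_{t ∈ ℝ} { x t − L(t) }, where L(t) = log((e^t − 1)/t), satisfies the symmetry I(x) = I(1−x) for all x ∈ ℝ, attains its minimum value 0 uniquely at x = 1/2, and I(x) = +∞ for x outside [0,1]. -/
/-- The limiting cumulant generating function `L(t) = log((e^t - 1)/t)`, extended by `L(0)=0`. -/
noncomputable def L (t : ℝ) : ℝ := if t = 0 then 0 else Real.log ((Real.exp t - 1) / t)

/-- The Fenchel–Legendre transform `I(x) = sup_t (x t - L(t))`, with values in `EReal`. -/
noncomputable def Irate (x : ℝ) : EReal := ⨆ t : ℝ, ((x * t - L t : ℝ) : EReal)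

/-!
Writing `(e^t - 1)/t = e^{t/2} · sinh(t/2)/(t/2)` shows that `L(t) - t/2 = log (sinh(t/2)/(t/2))`
is even, i.e. `L(-t) = L(t) - t`; substituting `t ↦ -t` in the supremum gives `I(x) = I(1 - x)`.
By the mean value theorem `sinh u / u = cosh c` for some `|c| ≤ |u|`, so
`0 ≤ log (sinh u / u) ≤ log (cosh u) ≤ u²/2`, i.e. `t/2 ≤ L(t) ≤ t/2 + t²/8`.
The lower bound gives `I(1/2) = 0`, the upper one `I(x) ≥ 2 (x - 1/2)² > 0`.
Finally `L ≤ 0` on `(-∞, 0]`, so for `x < 0` the function `x t - L(t) ≥ x t` is unbounded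
as `t → -∞`; the case `x > 1` follows by symmetry.
-/

open Real

lemma exists_cosh_eq_sinh_div_self {u : ℝ} (hu : u ≠ 0) : ∃ c, |c| ≤ |u| ∧ cosh c = sinh u / u := by
  wlog hpos : 0 < u generalizing u
  · obtain ⟨c, hc, hcu⟩ := this (neg_ne_zero.mpr hu) (by grind)
    exact ⟨c, by rwa [abs_neg] at hc, by rwa [sinh_neg, neg_div_neg_eq] at hcu⟩
  obtain ⟨c, hc, hcu⟩ := exists_hasDerivAt_eq_slope sinh cosh hpos continuous_sinh.continuousOn
    fun x _ => hasDerivAt_sinh x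
  refine ⟨c, ?_, by simpa using hcu⟩
  rw [abs_of_pos hc.1, abs_of_pos hpos]
  exact hc.2.le

lemma one_le_sinh_div_self {u : ℝ} (hu : u ≠ 0) : 1 ≤ sinh u / u := by
  obtain ⟨c, -, hc⟩ := exists_cosh_eq_sinh_div_self hu
  exact hc ▸ one_le_cosh c

lemma log_sinh_div_self_nonneg (u : ℝ) : 0 ≤ log (sinh u / u) := by
  rcases eq_or_ne u 0 with rfl | hu
  · simp
  · exact log_nonneg (one_le_sinh_div_self hu)

lemma log_sinh_div_self_le (u : ℝ) : log (sinh u / u) ≤ u ^ 2 / 2 := by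
  rcases eq_or_ne u 0 with rfl | hu
  · simp
  obtain ⟨c, hcu, hc⟩ := exists_cosh_eq_sinh_div_self hu
  rw [← hc, log_le_iff_le_exp (cosh_pos c)]
  exact (cosh_le_cosh.mpr hcu).trans (cosh_le_exp_half_sq u)

lemma exp_sub_one_div_self (t : ℝ) :
    (exp t - 1) / t = exp (t / 2) * (sinh (t / 2) / (t / 2)) := by
  have h : exp t = exp (t / 2) * exp (t / 2) := by rw [← exp_add, add_halves]
  rw [sinh_eq, h, exp_neg]
  field_simp

-- At `t = 0` both sides vanish, since `0 / 0 = 0` and `log 0 = 0`.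
lemma L_eq (t : ℝ) : L t = t / 2 + log (sinh (t / 2) / (t / 2)) := by
  rcases eq_or_ne t 0 with rfl | ht
  · simp [L]
  have hpos : sinh (t / 2) / (t / 2) ≠ 0 :=
    (zero_lt_one.trans_le (one_le_sinh_div_self (div_ne_zero ht two_ne_zero))).ne'
  rw [L, if_neg ht, exp_sub_one_div_self, log_mul (exp_ne_zero _) hpos, log_exp]

lemma L_neg (t : ℝ) : L (-t) = L t - t := by
  rw [L_eq, L_eq, neg_div, sinh_neg, neg_div_neg_eq]
  ring

lemma half_le_L (t : ℝ) : t / 2 ≤ L t := by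
  rw [L_eq]
  linarith [log_sinh_div_self_nonneg (t / 2)]

lemma L_le (t : ℝ) : L t ≤ t / 2 + t ^ 2 / 8 := by
  rw [L_eq]
  linarith [log_sinh_div_self_le (t / 2)]

lemma L_nonpos {t : ℝ} (ht : t ≤ 0) : L t ≤ 0 := by
  rcases ht.lt_or_eq with ht | rfl
  · rw [L, if_neg ht.ne]
    refine log_nonpos (div_nonneg_of_nonpos ?_ ht.le) ((div_le_one_of_neg ht).mpr ?_)
    · linarith [exp_le_one_iff.mpr ht.le]
    · linarith [add_one_le_exp t]
  · simp [L]

lemma le_Irate (x t : ℝ) : ((x * t - L t : ℝ) : EReal) ≤ Irate x :=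
  le_iSup (fun t => ((x * t - L t : ℝ) : EReal)) t

lemma Irate_one_sub (x : ℝ) : Irate (1 - x) = Irate x := by
  rw [Irate, Irate, ← (Equiv.neg ℝ).iSup_comp]
  congr! 2 with t
  rw [Equiv.neg_apply, L_neg]
  congr 1
  ring

lemma Irate_half : Irate (1 / 2) = 0 := by
  refine le_antisymm (iSup_le fun t => ?_) ?_
  · exact EReal.coe_nonpos.mpr (by linarith [half_le_L t])
  · simpa [L] using le_Irate (1 / 2) 0

lemma Irate_pos {x : ℝ} (hx : x ≠ 1 / 2) : 0 < Irate x := by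
  -- `t = 4 (x - 1/2)` maximises the quadratic lower bound `(x - 1/2) t - t² / 8`
  have hval : 0 < x * (4 * (x - 1 / 2)) - L (4 * (x - 1 / 2)) := by
    nlinarith [L_le (4 * (x - 1 / 2)), sq_pos_of_ne_zero (sub_ne_zero.mpr hx)]
  exact (EReal.coe_pos.mpr hval).trans_le (le_Irate x _)

lemma Irate_eq_top_of_neg {x : ℝ} (hx : x < 0) : Irate x = ⊤ := by
  refine (EReal.eq_top_iff_forall_lt _).mpr fun y => ?_
  have ht : (|y| + 1) / x ≤ 0 := div_nonpos_of_nonneg_of_nonpos (by positivity) hx.le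
  have hval : y < x * ((|y| + 1) / x) - L ((|y| + 1) / x) := by
    rw [mul_div_cancel₀ _ hx.ne]
    linarith [le_abs_self y, L_nonpos ht]
  exact (EReal.coe_lt_coe_iff.mpr hval).trans_le (le_Irate x _)

theorem stmt_6 :
    (∀ x : ℝ, Irate x = Irate (1 - x)) ∧
    Irate (1 / 2) = 0 ∧
    (∀ x : ℝ, x ≠ 1 / 2 → 0 < Irate x) ∧
    (∀ x : ℝ, (x < 0 ∨ 1 < x) → Irate x = ⊤) := by
  refine ⟨fun x => (Irate_one_sub x).symm, Irate_half, fun x => Irate_pos, ?_⟩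
  rintro x (hx | hx)
  · exact Irate_eq_top_of_neg hx
  · rw [← Irate_one_sub]
    exact Irate_eq_top_of_neg (by linarith)
end

section
/- Let t > 0. For all v ∈ [−π, π], Re(L(t+iv) − L(t)) ≤ −λ_t v²/2 where λ_t = t² L''(t)/(t² + π²) and L(z) = log((e^z − 1)/z) denotes the principal branch. -/
/-- Complex version `L(z) = log((e^z - 1)/z)` (principal branch). -/
noncomputable def Lc (z : ℂ) : ℂ := Complex.log ((Complex.exp z - 1) / z)

/-!
Write `z = t + iv` and `κ = t² L''(t)`. Since `|e^z - 1|² = (e^t - 1)² + 2e^t(1 - cos v)` and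
`L''(t) = 1/t² - e^t/(e^t - 1)²`, the real part of `2(L(z) - L(t))` is exactly `log X` with
`X = (t² + 2(1 - κ)(1 - cos v)) / (t² + v²)`. Then `log X ≤ X - 1`, and `2(1 - cos v) ≤ v²`
gives `X - 1 ≤ -κ v² / (t² + v²) ≤ -κ v² / (t² + π²)`. The last step uses `κ ≥ 0`, i.e.
`(e^t - 1)² ≥ t² e^t`, which is `2 sinh (t/2) ≥ t`.
-/

open Real

lemma exp_sub_one_pos_of_pos {t : ℝ} (ht : 0 < t) : 0 < exp t - 1 :=
  sub_pos.mpr (one_lt_exp_iff.mpr ht)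

lemma L_eventuallyEq {t : ℝ} (ht : 0 < t) :
    L =ᶠ[nhds t] fun x => log (exp x - 1) - log x := by
  filter_upwards [Ioi_mem_nhds ht] with x (hx : 0 < x)
  rw [L, if_neg hx.ne', log_div (exp_sub_one_pos_of_pos hx).ne' hx.ne']

lemma deriv_L {t : ℝ} (ht : 0 < t) : deriv L t = exp t / (exp t - 1) - t⁻¹ := by
  rw [(L_eventuallyEq ht).deriv_eq]
  exact ((((hasDerivAt_exp t).sub_const 1).log (exp_sub_one_pos_of_pos ht).ne').sub
    (hasDerivAt_log ht.ne')).deriv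

lemma deriv_deriv_L {t : ℝ} (ht : 0 < t) :
    deriv (deriv L) t = (t ^ 2)⁻¹ - exp t / (exp t - 1) ^ 2 := by
  have hL' : deriv L =ᶠ[nhds t] fun x => exp x / (exp x - 1) - x⁻¹ := by
    filter_upwards [Ioi_mem_nhds ht] with x (hx : 0 < x) using deriv_L hx
  have hd : HasDerivAt (fun x => exp x / (exp x - 1) - x⁻¹) _ t :=
    ((hasDerivAt_exp t).div ((hasDerivAt_exp t).sub_const 1) (exp_sub_one_pos_of_pos ht).ne').sub
      (hasDerivAt_inv ht.ne')
  rw [hL'.deriv_eq, hd.deriv]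
  field_simp [(exp_sub_one_pos_of_pos ht).ne']
  ring

lemma exp_mul_sq_lt_sq_exp_sub_one {t : ℝ} (ht : 0 < t) : exp t * t ^ 2 < (exp t - 1) ^ 2 := by
  have hfactor : exp t - 1 = exp (t / 2) * (2 * sinh (t / 2)) := by
    rw [sinh_eq, mul_div_cancel₀ _ two_ne_zero, mul_sub, ← exp_add, ← exp_add]; norm_num
  have hsinh : t < 2 * sinh (t / 2) := by linarith [self_lt_sinh_iff.mpr (half_pos ht)]
  rw [hfactor, mul_pow, ← exp_nat_mul, Nat.cast_ofNat, mul_div_cancel₀ _ two_ne_zero]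
  gcongr

lemma normSq_exp_sub_one (x y : ℝ) :
    Complex.normSq (Complex.exp (x + y * Complex.I) - 1) =
      (exp x - 1) ^ 2 + 2 * exp x * (1 - cos y) := by
  simp [Complex.normSq_apply, Complex.exp_re, Complex.exp_im]
  linear_combination (exp x) ^ 2 * sin_sq_add_cos_sq y

lemma two_mul_re_Lc (z : ℂ) : 2 * (Lc z).re = log (Complex.normSq ((Complex.exp z - 1) / z)) := by
  rw [Lc, Complex.log_re, Complex.normSq_eq_norm_sq, log_pow]; push_cast; ring

lemma two_mul_re_Lc_sub {t : ℝ} (ht : 0 < t) (v : ℝ) :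
    2 * (Lc (t + v * Complex.I) - Lc t).re =
      log ((t ^ 2 + 2 * (1 - t ^ 2 * deriv (deriv L) t) * (1 - cos v)) / (t ^ 2 + v ^ 2)) := by
  have hE := exp_sub_one_pos_of_pos ht
  rw [Complex.sub_re, mul_sub, two_mul_re_Lc, two_mul_re_Lc, map_div₀, map_div₀,
    normSq_exp_sub_one, Complex.normSq_add_mul_I, ← Complex.ofReal_exp, ← Complex.ofReal_one,
    ← Complex.ofReal_sub, Complex.normSq_ofReal, Complex.normSq_ofReal, ← log_div, deriv_deriv_L ht]
  · congr 1; field_simp; ring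
  · have hcos : 0 ≤ 1 - cos v := sub_nonneg.mpr (cos_le_one v)
    positivity
  · positivity

lemma log_div_sq_add_sq_le {t v κ r : ℝ} (ht : 0 < t) (hκ₀ : 0 ≤ κ) (hκ₁ : κ ≤ 1)
    (hv : v ^ 2 ≤ r) :
    log ((t ^ 2 + 2 * (1 - κ) * (1 - cos v)) / (t ^ 2 + v ^ 2)) ≤
      -(κ / (t ^ 2 + r)) * v ^ 2 := by
  have hcos : 2 * (1 - cos v) ≤ v ^ 2 := by linarith [one_sub_sq_div_two_le_cos (x := v)]
  have hcos₁ : 0 ≤ 1 - cos v := by linarith [cos_le_one v]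
  calc log ((t ^ 2 + 2 * (1 - κ) * (1 - cos v)) / (t ^ 2 + v ^ 2))
      ≤ (t ^ 2 + 2 * (1 - κ) * (1 - cos v)) / (t ^ 2 + v ^ 2) - 1 :=
        log_le_sub_one_of_pos (by positivity)
    _ ≤ -κ * v ^ 2 / (t ^ 2 + v ^ 2) := by
        rw [sub_le_iff_le_add, div_add_one (by positivity),
          div_le_div_iff_of_pos_right (by positivity)]
        nlinarith [mul_le_mul_of_nonneg_left hcos (sub_nonneg.mpr hκ₁)]
    _ ≤ -(κ / (t ^ 2 + r)) * v ^ 2 := by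
        rw [neg_mul, neg_mul, neg_div, neg_le_neg_iff, div_mul_eq_mul_div]
        gcongr

lemma sq_mul_deriv_deriv_L_mem_Icc {t : ℝ} (ht : 0 < t) :
    t ^ 2 * deriv (deriv L) t ∈ Set.Icc 0 1 := by
  have hE := exp_sub_one_pos_of_pos ht
  have hformula : t ^ 2 * deriv (deriv L) t = 1 - exp t * t ^ 2 / (exp t - 1) ^ 2 := by
    rw [deriv_deriv_L ht]; field_simp
  rw [hformula]
  constructor
  · rw [sub_nonneg, div_le_one (by positivity)]
    exact (exp_mul_sq_lt_sq_exp_sub_one ht).le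
  · linarith [show 0 ≤ exp t * t ^ 2 / (exp t - 1) ^ 2 by positivity]

theorem stmt_8 (t : ℝ) (ht : 0 < t) (v : ℝ) (hv : v ∈ Set.Icc (-Real.pi) Real.pi) :
    (Lc (t + v * Complex.I) - Lc t).re ≤
      -(t ^ 2 * deriv (deriv L) t / (t ^ 2 + Real.pi ^ 2)) * v ^ 2 / 2 := by
  obtain ⟨hκ₀, hκ₁⟩ := sq_mul_deriv_deriv_L_mem_Icc ht
  have hv_sq : v ^ 2 ≤ π ^ 2 := sq_le_sq' hv.1 hv.2
  have h := log_div_sq_add_sq_le ht hκ₀ hκ₁ hv_sq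
  rw [← two_mul_re_Lc_sub ht] at h
  linarith
end

section
/- For every n ≥ 1 and every real t > 0, there is a constant C_t (independent of n) such that for all v ∈ [−π, π], |r_n(t+iv)| ≤ C_t · |(t+iv)/(t+i(2π−|v|))|^{n+1} ≤ C_t, where r_n(z) = Σ_{ℓ ∈ ℤ, ℓ≠0} (1 + 2πiℓ/z)^{−(n+1)}. -/
/-- `r_n(z) = ∑_{ℓ ∈ ℤ, ℓ ≠ 0} (1 + 2πiℓ/z)^{-(n+1)}`. -/
noncomputable def rfn (n : ℕ) (z : ℂ) : ℂ :=
  ∑' ℓ : ℤ, if ℓ = 0 then 0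
    else ((1 + (2 * Real.pi * Complex.I * ℓ) / z) ^ (n + 1))⁻¹

/-!
With `z = t + iv` and `w_ℓ = z + 2πiℓ`, the `ℓ`-th summand of `r_n(z)` is `(z / w_ℓ)^(n+1)`.
For `|v| ≤ π` the point `w = t + i(2π - |v|)` satisfies `|z| ≤ |w| ≤ |w_ℓ|` for every `ℓ ≠ 0`,
because `2π - |v|` is the least value of `|Im w_ℓ|`. Hence
`|z / w_ℓ|^(n+1) ≤ |z / w|^(n+1) |w / w_ℓ|^2 ≤ |z / w|^(n+1) (t² + 4π²) / (π² ℓ²)` once `n ≥ 1`,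
and summing with `∑_{ℓ ≠ 0} 1/ℓ² = π²/3` gives the bound with `C_t = (t² + 4π²)/3`.
-/

open Complex Real

lemma inv_one_add_div_pow {K : Type*} [Field K] {z : K} (hz : z ≠ 0) (c : K) (n : ℕ) :
    ((1 + c / z) ^ n)⁻¹ = (z / (z + c)) ^ n := by
  rw [← inv_pow, one_add_div hz, inv_div]

lemma hasSum_one_div_int_sq : HasSum (fun ℓ : ℤ => 1 / (ℓ : ℝ) ^ 2) (π ^ 2 / 3) := by
  have h := hasSum_zeta_two.of_nat_of_neg (f := fun ℓ : ℤ => 1 / (ℓ : ℝ) ^ 2)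
    (by simpa using hasSum_zeta_two)
  rwa [show π ^ 2 / 6 + π ^ 2 / 6 - 1 / ((0 : ℤ) : ℝ) ^ 2 = π ^ 2 / 3 by simp; ring] at h

lemma norm_add_mul_I_le_of_abs_le (t : ℝ) {x y : ℝ} (h : |x| ≤ |y|) :
    ‖(t : ℂ) + x * I‖ ≤ ‖(t : ℂ) + y * I‖ := by
  rw [norm_add_mul_I, norm_add_mul_I]
  exact Real.sqrt_le_sqrt (by nlinarith [sq_le_sq.mpr h])

lemma two_pi_mul_abs_sub_abs_le (v : ℝ) (ℓ : ℤ) : 2 * π * |(ℓ : ℝ)| - |v| ≤ |v + 2 * π * ℓ| := by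
  have := abs_sub_abs_le_abs_sub (2 * π * (ℓ : ℝ)) (-v)
  rwa [abs_neg, sub_neg_eq_add, abs_mul, abs_of_pos two_pi_pos, add_comm] at this

lemma ofReal_add_mul_I_ne_zero {t : ℝ} (ht : t ≠ 0) (y : ℝ) : (t : ℂ) + y * I ≠ 0 :=
  fun h => ht (by simpa using congrArg re h)

lemma norm_div_two_pi_sub_abs_le_one (t : ℝ) {v : ℝ} (hv : |v| ≤ π) :
    ‖((t : ℂ) + v * I) / (t + (2 * π - |v| : ℝ) * I)‖ ≤ 1 := by
  rw [norm_div]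
  refine div_le_one_of_le₀ (norm_add_mul_I_le_of_abs_le t ?_) (norm_nonneg _)
  rw [abs_of_nonneg (a := 2 * π - |v|) (by linarith [pi_pos])]
  linarith

section Shift

variable {t v : ℝ} {ℓ : ℤ}

lemma norm_div_shift_le_one (hv : |v| ≤ π) (hℓ : ℓ ≠ 0) :
    ‖((t : ℂ) + (2 * π - |v| : ℝ) * I) / (t + (v + 2 * π * ℓ : ℝ) * I)‖ ≤ 1 := by
  rw [norm_div]
  refine div_le_one_of_le₀ (norm_add_mul_I_le_of_abs_le t ?_) (norm_nonneg _)
  have hℓ1 : (1 : ℝ) ≤ |(ℓ : ℝ)| := by exact_mod_cast Int.one_le_abs hℓ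
  rw [abs_of_nonneg (a := 2 * π - |v|) (by linarith [pi_pos])]
  nlinarith [two_pi_mul_abs_sub_abs_le v ℓ, pi_pos]

lemma norm_div_shift_sq_le (hv : |v| ≤ π) (hℓ : ℓ ≠ 0) :
    ‖((t : ℂ) + (2 * π - |v| : ℝ) * I) / (t + (v + 2 * π * ℓ : ℝ) * I)‖ ^ 2 ≤
      (t ^ 2 + 4 * π ^ 2) / π ^ 2 * (1 / (ℓ : ℝ) ^ 2) := by
  have hℓ1 : (1 : ℝ) ≤ |(ℓ : ℝ)| := by exact_mod_cast Int.one_le_abs hℓ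
  have hπℓ : π * |(ℓ : ℝ)| ≤ |v + 2 * π * ℓ| := by
    nlinarith [two_pi_mul_abs_sub_abs_le v ℓ, pi_pos]
  have hsq : π ^ 2 * (ℓ : ℝ) ^ 2 ≤ (v + 2 * π * ℓ) ^ 2 := by
    simpa only [mul_pow, sq_abs] using pow_le_pow_left₀ (by positivity) hπℓ 2
  rw [norm_div, div_pow, Complex.sq_norm, Complex.sq_norm, normSq_add_mul_I, normSq_add_mul_I,
    div_mul_div_comm, mul_one]
  have hv2 : |v| ^ 2 ≤ π ^ 2 := pow_le_pow_left₀ (abs_nonneg v) hv 2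
  apply div_le_div₀ (by positivity) (by nlinarith [abs_nonneg v, pi_pos])
    (by have : (ℓ : ℝ) ≠ 0 := Int.cast_ne_zero.mpr hℓ; positivity) (by nlinarith)

end Shift

lemma norm_rfn_summand_le {t v : ℝ} (ht : t ≠ 0) (hv : |v| ≤ π) {n : ℕ} (hn : 1 ≤ n) (ℓ : ℤ) :
    ‖if ℓ = 0 then (0 : ℂ) else ((1 + (2 * π * I * ℓ) / (t + v * I)) ^ (n + 1))⁻¹‖ ≤
      ‖((t : ℂ) + v * I) / (t + (2 * π - |v| : ℝ) * I)‖ ^ (n + 1) *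
        ((t ^ 2 + 4 * π ^ 2) / π ^ 2 * (1 / (ℓ : ℝ) ^ 2)) := by
  rcases eq_or_ne ℓ 0 with rfl | hℓ
  · simp -- both sides vanish, the right one because `1 / (0 : ℝ) ^ 2 = 0`
  have hshift : (t : ℂ) + v * I + 2 * π * I * ℓ = t + (v + 2 * π * ℓ : ℝ) * I := by
    push_cast; ring
  rw [if_neg hℓ, inv_one_add_div_pow (ofReal_add_mul_I_ne_zero ht v), hshift,
    ← div_mul_div_cancel₀ (ofReal_add_mul_I_ne_zero ht (2 * π - |v|)), mul_pow, norm_mul,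
    norm_pow, norm_pow]
  gcongr
  calc _ ≤ ‖((t : ℂ) + (2 * π - |v| : ℝ) * I) / (t + (v + 2 * π * ℓ : ℝ) * I)‖ ^ 2 :=
        pow_le_pow_of_le_one (norm_nonneg _) (norm_div_shift_le_one hv hℓ) (by omega)
    _ ≤ _ := norm_div_shift_sq_le hv hℓ

lemma norm_rfn_le {t v : ℝ} (ht : t ≠ 0) (hv : |v| ≤ π) {n : ℕ} (hn : 1 ≤ n) :
    ‖rfn n (t + v * I)‖ ≤
      (t ^ 2 + 4 * π ^ 2) / 3 * ‖((t : ℂ) + v * I) / (t + (2 * π - |v| : ℝ) * I)‖ ^ (n + 1) := by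
  refine (tsum_of_norm_bounded ((hasSum_one_div_int_sq.mul_left _).mul_left _)
    (norm_rfn_summand_le ht hv hn)).trans_eq ?_
  field_simp [pi_ne_zero]

theorem stmt_9 (t : ℝ) (ht : 0 < t) :
    ∃ C : ℝ, 0 ≤ C ∧ ∀ n : ℕ, 1 ≤ n → ∀ v ∈ Set.Icc (-Real.pi) Real.pi,
      ‖rfn n (t + v * Complex.I)‖ ≤
          C * ‖(t + v * Complex.I) / (t + (2 * Real.pi - |v|) * Complex.I)‖ ^ (n + 1)
        ∧
      C * ‖(t + v * Complex.I) / (t + (2 * Real.pi - |v|) * Complex.I)‖ ^ (n + 1)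
        ≤ C := by
  refine ⟨(t ^ 2 + 4 * π ^ 2) / 3, by positivity, fun n hn v hv => ?_⟩
  have hv' : |v| ≤ π := abs_le.mpr hv
  have hw : (t : ℂ) + (2 * π - |v|) * I = t + (2 * π - |v| : ℝ) * I := by push_cast; rfl
  rw [hw]
  exact ⟨norm_rfn_le ht.ne' hv' hn, mul_le_of_le_one_right (by positivity)
    (pow_le_one₀ (norm_nonneg _) (norm_div_two_pi_sub_abs_le_one t hv'))⟩
end

section
/- For a uniform random permutation π_{n+1} of size n+1 built by inserting a uniform point into the graphical representation of a uniform π_n of size n, the number of insertion cells (out of (n+1)²) which simultaneously increase the descent count and the inverse-descent count by 1 equals (n−D_n)(n−D'_n)+n; the number increasing only the descent count equals (n−D_n)(D'_n+1)−n; only the inverse-descent count: (D_n+1)(n−D'_n)−n; neither: (D_n+1)(D'_n+1)+n. Here D_n, D'_n are the numbers of descents of π_n and π_n^{-1}. -/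
/-!
Encode `σ` by its framed sequence `a = (n + 1, σ 0 + 1, …, σ (n - 1) + 1, 0)`, whose number of
descents is `descNum σ + 2` for `n ≥ 1`. Inserting a point in cell `(k, ℓ)` inserts the value
`ℓ + 1` between `a k` and `a (k + 1)` after shifting the values above `ℓ` up by one, so the descent
number jumps by `J(k, ℓ) = [a k ≤ a (k + 1)] + [ℓ < a k] - [ℓ < a (k + 1)] ∈ {0, 1}`; the jump `J'`
of `σ⁻¹` is obtained in the same way. The four counts are the sums over all cells of `J J'`,
`J - J J'`, `J' - J J'` and `(1 - J) (1 - J')`. The difference in `J` telescopes in `k`, which gives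
`∑ₖ J(k, ℓ) = n - descNum σ` for every `ℓ`; in `∑ J J'` the only term that does not split into
such sums is a product of two telescoping differences, and its sum over `k` is `1` for every `ℓ`
because the framed sequences of `σ` and `σ⁻¹` are inverse to each other.
-/

/-- Number of descents of a permutation of `Fin n`. -/
def descNum {n : ℕ} (σ : Equiv.Perm (Fin n)) : ℕ :=
  (Finset.univ.filter fun p : Fin n × Fin n =>
    (p.1 : ℕ) + 1 = (p.2 : ℕ) ∧ σ p.2 < σ p.1).card

/-- Insertion of a point in cell `(k, ℓ)` of the graphical representation of `σ`:
the new permutation sends `k ↦ ℓ` and otherwise acts as `σ` on the remaining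
positions/values (via `succAbove`). -/
def insertPerm {n : ℕ} (σ : Equiv.Perm (Fin n)) (k ℓ : Fin (n + 1)) :
    Equiv.Perm (Fin (n + 1)) :=
  (finSuccEquiv' k).trans ((Equiv.optionCongr σ).trans (finSuccEquiv' ℓ).symm)

open Finset

def seqDescNum (f : ℕ → ℕ) (m : ℕ) : ℕ :=
  ∑ j ∈ range m, if f (j + 1) < f j then 1 else 0

def seqInsert (f : ℕ → ℕ) (k v : ℕ) (j : ℕ) : ℕ :=
  if j ≤ k then f j else if j = k + 1 then v else f (j - 1)

def shiftAbove (ℓ v : ℕ) : ℕ :=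
  if v ≤ ℓ then v else v + 1

lemma seqDescNum_succ (f : ℕ → ℕ) (m : ℕ) :
    seqDescNum f (m + 1) = seqDescNum f m + if f (m + 1) < f m then 1 else 0 :=
  sum_range_succ _ _

lemma strictMono_shiftAbove (ℓ : ℕ) : StrictMono (shiftAbove ℓ) := by
  intro a b h
  unfold shiftAbove
  split_ifs <;> omega

lemma seqDescNum_comp_of_strictMono {g : ℕ → ℕ} (hg : StrictMono g) (f : ℕ → ℕ) (m : ℕ) :
    seqDescNum (g ∘ f) m = seqDescNum f m := by
  simp only [seqDescNum, Function.comp_apply, hg.lt_iff_lt]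

lemma seqDescNum_seqInsert (f : ℕ → ℕ) (v : ℕ) {k m : ℕ} (hkm : k < m) :
    seqDescNum (seqInsert f k v) (m + 1) + (if f (k + 1) < f k then 1 else 0) =
      seqDescNum f m + (if v < f k then 1 else 0) + (if f (k + 1) < v then 1 else 0) := by
  induction m, hkm using Nat.le_induction with
  | base =>
    have hbelow : ∀ j ∈ range k, seqInsert f k v (j + 1) = f (j + 1) ∧ seqInsert f k v j = f j :=
      fun j hj => by simp only [mem_range] at hj; simp [seqInsert, hj.le, Nat.succ_le_of_lt hj]
    simp only [seqDescNum, sum_range_succ]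
    rw [sum_congr rfl fun j hj => by rw [(hbelow j hj).1, (hbelow j hj).2]]
    simp [seqInsert]
    omega
  | succ m hkm ih =>
    rw [seqDescNum_succ, seqDescNum_succ f]
    simp only [seqInsert, if_neg (show ¬ m + 1 + 1 ≤ k by omega),
      if_neg (show ¬ m + 1 ≤ k by omega),
      if_neg (show m + 1 + 1 ≠ k + 1 by omega), if_neg (show m + 1 ≠ k + 1 by omega),
      Nat.add_sub_cancel]
    omega

/-- The one-line notation of `σ` with all values raised by one, framed by `n + 1` on the left and
`0` on the right. On `{0, …, n + 1}` it is a permutation, with inverse `framedSeq σ⁻¹`. -/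
def framedSeq {n : ℕ} (σ : Equiv.Perm (Fin n)) : ℕ → ℕ
  | 0 => n + 1
  | i + 1 => if h : i < n then σ ⟨i, h⟩ + 1 else 0

section framedSeq

variable {n : ℕ} (σ : Equiv.Perm (Fin n))

@[simp] lemma framedSeq_zero : framedSeq σ 0 = n + 1 := rfl

lemma framedSeq_succ {i : ℕ} (hi : i < n) : framedSeq σ (i + 1) = σ ⟨i, hi⟩ + 1 := by
  simp [framedSeq, hi]

lemma framedSeq_succ_of_le {i : ℕ} (hi : n ≤ i) : framedSeq σ (i + 1) = 0 := by
  simp [framedSeq, hi]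

lemma framedSeq_le (j : ℕ) : framedSeq σ j ≤ n + 1 := by
  rcases j with _ | i
  · rfl
  · rcases Nat.lt_or_ge i n with hi | hi
    · rw [framedSeq_succ σ hi]
      exact Nat.succ_le_succ (σ _).isLt.le
    · rw [framedSeq_succ_of_le σ hi]
      exact Nat.zero_le _

lemma framedSeq_framedSeq_inv {j : ℕ} (hj : j ≤ n + 1) : framedSeq σ (framedSeq σ⁻¹ j) = j := by
  rcases j with _ | i
  · simp [framedSeq_succ_of_le]
  · rcases Nat.lt_or_ge i n with hi | hi
    · rw [framedSeq_succ _ hi, framedSeq_succ _ (σ⁻¹ ⟨i, hi⟩).isLt]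
      simp
    · obtain rfl : i = n := by omega
      rw [framedSeq_succ_of_le _ le_rfl, framedSeq_zero]

lemma descNum_eq_card_framedSeq :
    descNum σ = #{j ∈ range (n - 1) | framedSeq σ (j + 2) < framedSeq σ (j + 1)} := by
  refine card_bij (fun p _ => (p.1 : ℕ)) ?_ ?_ ?_
  · rintro ⟨i, j⟩ hp
    simp only [mem_filter, mem_univ, true_and] at hp
    obtain ⟨hij, hdesc⟩ := hp
    have hj : (j : ℕ) = i + 1 := hij.symm
    simp only [mem_filter, mem_range]
    refine ⟨by omega, ?_⟩
    rw [show (i : ℕ) + 2 = j + 1 by omega, framedSeq_succ _ j.isLt, framedSeq_succ _ i.isLt]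
    exact Nat.succ_lt_succ hdesc
  · rintro ⟨i, j⟩ hp ⟨i', j'⟩ hp' (h : (i : ℕ) = i')
    simp only [mem_filter, mem_univ, true_and] at hp hp'
    ext <;> simp <;> omega
  · intro i hi
    simp only [mem_filter, mem_range] at hi
    obtain ⟨hi, hdesc⟩ := hi
    refine ⟨(⟨i, by omega⟩, ⟨i + 1, by omega⟩), ?_, rfl⟩
    simp only [mem_filter, mem_univ, true_and]
    rw [framedSeq_succ σ (show i + 1 < n by omega), framedSeq_succ σ (show i < n by omega)] at hdesc
    exact Nat.lt_of_succ_lt_succ hdesc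

lemma seqDescNum_framedSeq (hn : 0 < n) : seqDescNum (framedSeq σ) (n + 1) = descNum σ + 2 := by
  obtain ⟨m, rfl⟩ : ∃ m, n = m + 1 := ⟨n - 1, by omega⟩
  have hfirst : framedSeq σ (0 + 1) < framedSeq σ 0 := by
    rw [framedSeq_succ σ m.succ_pos, framedSeq_zero]
    exact Nat.succ_lt_succ (σ _).isLt
  have hlast : framedSeq σ (m + 1 + 1) < framedSeq σ (m + 1) := by
    rw [framedSeq_succ_of_le σ le_rfl, framedSeq_succ σ m.lt_succ_self]
    exact Nat.succ_pos _
  rw [seqDescNum_succ, seqDescNum, sum_range_succ', if_pos hfirst, if_pos hlast,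
    descNum_eq_card_framedSeq, card_filter]
  rfl

end framedSeq

lemma shiftAbove_val_add_one {n : ℕ} (ℓ : Fin (n + 1)) (x : Fin n) :
    shiftAbove ℓ (x + 1) = (ℓ.succAbove x : ℕ) + 1 := by
  unfold Fin.succAbove shiftAbove
  split_ifs with h h' h' <;> simp_all [Fin.lt_def]; omega

lemma seqInsert_succAbove (f : ℕ → ℕ) {n : ℕ} (k : Fin (n + 1)) (v : ℕ) (x : Fin n) :
    seqInsert f k v ((k.succAbove x : ℕ) + 1) = f (x + 1) := by
  unfold Fin.succAbove seqInsert
  split_ifs with h h' h'' <;> simp_all [Fin.lt_def] <;> omega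

section insertPerm

variable {n : ℕ} (σ : Equiv.Perm (Fin n)) (k ℓ : Fin (n + 1))

lemma insertPerm_self : insertPerm σ k ℓ k = ℓ := by
  simp [insertPerm]

lemma insertPerm_succAbove (i : Fin n) :
    insertPerm σ k ℓ (k.succAbove i) = ℓ.succAbove (σ i) := by
  simp [insertPerm, finSuccEquiv'_succAbove, finSuccEquiv'_symm_some]

lemma insertPerm_inv : (insertPerm σ k ℓ)⁻¹ = insertPerm σ⁻¹ ℓ k := by
  ext x
  simp [insertPerm, Equiv.Perm.inv_def, Equiv.optionCongr_symm]

lemma framedSeq_insertPerm :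
    framedSeq (insertPerm σ k ℓ) = seqInsert (shiftAbove ℓ ∘ framedSeq σ) k (ℓ + 1) := by
  funext j
  rcases j with _ | i
  · simp [seqInsert, shiftAbove]
    omega
  rcases Nat.lt_or_ge i (n + 1) with hi | hi
  · rw [framedSeq_succ _ hi]
    obtain rfl | hk := eq_or_ne ⟨i, hi⟩ k
    · simp [insertPerm_self, seqInsert]
    · obtain ⟨x, hx⟩ := Fin.exists_succAbove_eq hk
      obtain rfl : i = k.succAbove x := congrArg Fin.val hx.symm
      rw [Fin.eta, insertPerm_succAbove, ← shiftAbove_val_add_one, seqInsert_succAbove,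
        Function.comp_apply, framedSeq_succ _ x.isLt]
  · rw [framedSeq_succ_of_le _ hi]
    obtain ⟨m, rfl⟩ : ∃ m, i = m + 1 := ⟨i - 1, by omega⟩
    have hk := k.isLt
    simp [seqInsert, show ¬ m + 1 + 1 ≤ k by omega, show m + 1 ≠ k by omega,
      framedSeq_succ_of_le _ (show n ≤ m by omega), shiftAbove]

end insertPerm

section descJump

variable {n : ℕ} (σ : Equiv.Perm (Fin n))

def aboveInd (ℓ j : ℕ) : ℤ := if ℓ < framedSeq σ j then 1 else 0

def ascentInd (k : ℕ) : ℤ := if framedSeq σ (k + 1) < framedSeq σ k then 0 else 1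

def descJump (k ℓ : ℕ) : ℤ := ascentInd σ k + (aboveInd σ ℓ k - aboveInd σ ℓ (k + 1))

lemma descJump_eq_zero_or_eq_one (k ℓ : ℕ) : descJump σ k ℓ = 0 ∨ descJump σ k ℓ = 1 := by
  unfold descJump ascentInd aboveInd
  split_ifs <;> omega

lemma descNum_insertPerm (hn : 0 < n) (k ℓ : Fin (n + 1)) :
    (descNum (insertPerm σ k ℓ) : ℤ) = descNum σ + descJump σ k ℓ := by
  have hτ := seqDescNum_framedSeq (insertPerm σ k ℓ) n.succ_pos
  have hins := seqDescNum_seqInsert (shiftAbove ℓ ∘ framedSeq σ) (ℓ + 1) k.isLt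
  rw [seqDescNum_comp_of_strictMono (strictMono_shiftAbove ℓ), seqDescNum_framedSeq σ hn,
    ← framedSeq_insertPerm, hτ] at hins
  unfold descJump ascentInd aboveInd
  simp only [Function.comp_apply, shiftAbove] at hins
  split_ifs at hins ⊢ <;> omega

end descJump

lemma sum_range_sub_mul_ite_lt (g : ℕ → ℤ) {t m : ℕ} (htm : t ≤ m) :
    ∑ k ∈ range m, (g k - g (k + 1)) * (if k < t then 1 else 0) = g 0 - g t := by
  rw [← sum_range_add_sum_Ico _ htm, sum_eq_zero (s := Ico t m) fun k hk => by
    rw [if_neg (mem_Ico.mp hk).1.not_gt, mul_zero], add_zero, ← sum_range_sub']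
  exact sum_congr rfl fun k hk => by rw [if_pos (mem_range.mp hk), mul_one]

section sums

variable {n : ℕ} (σ : Equiv.Perm (Fin n))

lemma sum_ascentInd (hn : 0 < n) : ∑ k ∈ range (n + 1), ascentInd σ k = n - 1 - descNum σ := by
  have hdesc := seqDescNum_framedSeq σ hn
  have hsum :
      ∑ k ∈ range (n + 1), ascentInd σ k + (seqDescNum (framedSeq σ) (n + 1) : ℤ) = n + 1 := by
    rw [seqDescNum, Nat.cast_sum, ← sum_add_distrib,
      sum_congr rfl fun k _ => by unfold ascentInd; split_ifs <;> rfl]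
    simp
  omega

lemma sum_aboveInd_sub {ℓ : ℕ} (hℓ : ℓ ≤ n) :
    ∑ j ∈ range (n + 1), (aboveInd σ ℓ j - aboveInd σ ℓ (j + 1)) = 1 := by
  rw [sum_range_sub']
  simp [aboveInd, framedSeq_succ_of_le]
  omega

/-- The sum telescopes up to the positions of the framed values `ℓ` and `ℓ + 1`. -/
lemma sum_aboveInd_sub_mul_aboveInd_inv_sub {ℓ : ℕ} (hℓ : ℓ ≤ n) :
    ∑ k ∈ range (n + 1), (aboveInd σ ℓ k - aboveInd σ ℓ (k + 1)) *
      (aboveInd σ⁻¹ k ℓ - aboveInd σ⁻¹ k (ℓ + 1)) = 1 := by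
  have hinv : ∀ k j, aboveInd σ⁻¹ k j = if k < framedSeq σ⁻¹ j then 1 else 0 := fun _ _ => rfl
  simp only [hinv, mul_sub, sum_sub_distrib]
  rw [sum_range_sub_mul_ite_lt _ (framedSeq_le σ⁻¹ ℓ),
    sum_range_sub_mul_ite_lt _ (framedSeq_le σ⁻¹ (ℓ + 1))]
  simp [aboveInd, framedSeq_framedSeq_inv σ (show ℓ ≤ n + 1 by omega),
    framedSeq_framedSeq_inv σ (show ℓ + 1 ≤ n + 1 by omega)]

lemma sum_descJump (hn : 0 < n) {ℓ : ℕ} (hℓ : ℓ ≤ n) :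
    ∑ k ∈ range (n + 1), descJump σ k ℓ = n - descNum σ := by
  simp only [descJump, sum_add_distrib, sum_ascentInd σ hn, sum_aboveInd_sub σ hℓ]
  ring

end sums

section cells

variable {n : ℕ} (σ : Equiv.Perm (Fin n))

lemma sum_sum_descJump (hn : 0 < n) :
    ∑ k ∈ range (n + 1), ∑ ℓ ∈ range (n + 1), descJump σ k ℓ = (n + 1) * (n - descNum σ) := by
  rw [sum_comm, sum_congr rfl fun ℓ hℓ => sum_descJump σ hn (Nat.lt_succ_iff.mp (mem_range.mp hℓ))]
  simp [mul_sub]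

lemma sum_sum_descJump_mul_descJump_inv (hn : 0 < n) :
    ∑ k ∈ range (n + 1), ∑ ℓ ∈ range (n + 1), descJump σ k ℓ * descJump σ⁻¹ ℓ k =
      (n - descNum σ) * (n - descNum σ⁻¹) + n := by
  have hle : ∀ i ∈ range (n + 1), i ≤ n := fun i hi => Nat.lt_succ_iff.mp (mem_range.mp hi)
  have hleft : ∑ k ∈ range (n + 1), ∑ ℓ ∈ range (n + 1),
      ascentInd σ k * (aboveInd σ⁻¹ k ℓ - aboveInd σ⁻¹ k (ℓ + 1)) =
        ∑ k ∈ range (n + 1), ascentInd σ k :=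
    sum_congr rfl fun k hk => by rw [← mul_sum, sum_aboveInd_sub σ⁻¹ (hle k hk), mul_one]
  have hright : ∑ k ∈ range (n + 1), ∑ ℓ ∈ range (n + 1),
      (aboveInd σ ℓ k - aboveInd σ ℓ (k + 1)) * ascentInd σ⁻¹ ℓ =
        ∑ ℓ ∈ range (n + 1), ascentInd σ⁻¹ ℓ := by
    rw [sum_comm]
    exact sum_congr rfl fun ℓ hℓ => by rw [← sum_mul, sum_aboveInd_sub σ (hle ℓ hℓ), one_mul]
  have hcross : ∑ k ∈ range (n + 1), ∑ ℓ ∈ range (n + 1),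
      (aboveInd σ ℓ k - aboveInd σ ℓ (k + 1)) * (aboveInd σ⁻¹ k ℓ - aboveInd σ⁻¹ k (ℓ + 1)) =
        n + 1 := by
    rw [sum_comm, sum_congr rfl fun ℓ hℓ => sum_aboveInd_sub_mul_aboveInd_inv_sub σ (hle ℓ hℓ)]
    simp
  simp only [descJump, add_mul, mul_add, sum_add_distrib]
  rw [hleft, hright, hcross, ← sum_mul_sum, sum_ascentInd σ hn, sum_ascentInd σ⁻¹ hn]
  ring

lemma card_insertPerm_cells_eq_sum (hn : 0 < n) (i j : ℕ) :
    (#{c : Fin (n + 1) × Fin (n + 1) | descNum (insertPerm σ c.1 c.2) = descNum σ + i ∧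
        descNum (insertPerm σ c.1 c.2)⁻¹ = descNum σ⁻¹ + j} : ℤ) =
      ∑ k ∈ range (n + 1), ∑ ℓ ∈ range (n + 1),
        (if descJump σ k ℓ = i then 1 else 0) * (if descJump σ⁻¹ ℓ k = j then 1 else 0) := by
  have hcell : ∀ k ℓ : Fin (n + 1),
      ((if descNum (insertPerm σ k ℓ) = descNum σ + i ∧
          descNum (insertPerm σ k ℓ)⁻¹ = descNum σ⁻¹ + j then 1 else 0 : ℕ) : ℤ) =
        (if descJump σ k ℓ = i then 1 else 0) * (if descJump σ⁻¹ ℓ k = j then 1 else 0) := by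
    intro k ℓ
    have hjump := descNum_insertPerm σ hn k ℓ
    have hjump_inv := descNum_insertPerm σ⁻¹ hn ℓ k
    rw [← insertPerm_inv] at hjump_inv
    rw [Nat.cast_ite, Nat.cast_one, Nat.cast_zero, ite_zero_mul_ite_zero, mul_one]
    exact if_congr (by omega) rfl rfl
  rw [card_filter, Nat.cast_sum, Fintype.sum_prod_type, ← Fin.sum_univ_eq_sum_range]
  refine sum_congr rfl fun k _ => ?_
  rw [← Fin.sum_univ_eq_sum_range]
  exact sum_congr rfl fun ℓ _ => hcell k ℓ

lemma ite_descJump_eq_one (k ℓ : ℕ) :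
    (if descJump σ k ℓ = 1 then 1 else 0 : ℤ) = descJump σ k ℓ := by
  rcases descJump_eq_zero_or_eq_one σ k ℓ with h | h <;> simp [h]

lemma ite_descJump_eq_zero (k ℓ : ℕ) :
    (if descJump σ k ℓ = 0 then 1 else 0 : ℤ) = 1 - descJump σ k ℓ := by
  rcases descJump_eq_zero_or_eq_one σ k ℓ with h | h <;> simp [h]

end cells

theorem stmt_11 (n : ℕ) (σ : Equiv.Perm (Fin n)) :
    ((Finset.univ.filter fun c : Fin (n + 1) × Fin (n + 1) =>
        descNum (insertPerm σ c.1 c.2) = descNum σ + 1 ∧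
        descNum (insertPerm σ c.1 c.2)⁻¹ = descNum σ⁻¹ + 1).card : ℤ) =
      ((n : ℤ) - descNum σ) * ((n : ℤ) - descNum σ⁻¹) + n ∧
    ((Finset.univ.filter fun c : Fin (n + 1) × Fin (n + 1) =>
        descNum (insertPerm σ c.1 c.2) = descNum σ + 1 ∧
        descNum (insertPerm σ c.1 c.2)⁻¹ = descNum σ⁻¹).card : ℤ) =
      ((n : ℤ) - descNum σ) * ((descNum σ⁻¹ : ℤ) + 1) - n ∧
    ((Finset.univ.filter fun c : Fin (n + 1) × Fin (n + 1) =>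
        descNum (insertPerm σ c.1 c.2) = descNum σ ∧
        descNum (insertPerm σ c.1 c.2)⁻¹ = descNum σ⁻¹ + 1).card : ℤ) =
      ((descNum σ : ℤ) + 1) * ((n : ℤ) - descNum σ⁻¹) - n ∧
    ((Finset.univ.filter fun c : Fin (n + 1) × Fin (n + 1) =>
        descNum (insertPerm σ c.1 c.2) = descNum σ ∧
        descNum (insertPerm σ c.1 c.2)⁻¹ = descNum σ⁻¹).card : ℤ) =
      ((descNum σ : ℤ) + 1) * ((descNum σ⁻¹ : ℤ) + 1) + n := by
  rcases Nat.eq_zero_or_pos n with rfl | hn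
  · obtain rfl : σ = 1 := Subsingleton.elim _ _
    decide
  have h11 := card_insertPerm_cells_eq_sum σ hn 1 1
  have h10 := card_insertPerm_cells_eq_sum σ hn 1 0
  have h01 := card_insertPerm_cells_eq_sum σ hn 0 1
  have h00 := card_insertPerm_cells_eq_sum σ hn 0 0
  simp only [add_zero, Nat.cast_add, Nat.cast_one, Nat.cast_zero, ite_descJump_eq_one,
    ite_descJump_eq_zero, mul_sub, sub_mul, one_mul, mul_one, sum_sub_distrib, sum_const,
    card_range, nsmul_eq_mul] at h11 h10 h01 h00
  have hD := sum_sum_descJump σ hn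
  have hD' := sum_sum_descJump σ⁻¹ hn
  rw [sum_comm] at hD'
  have hDD := sum_sum_descJump_mul_descJump_inv σ hn
  refine ⟨?_, ?_, ?_, ?_⟩
  · linear_combination h11 + hDD
  · linear_combination h10 + hD - hDD
  · linear_combination h01 + hD' - hDD
  · linear_combination h00 - hD - hD' + hDD
end

section
/- In the graphical-representation insertion model, for each fiber ℓ ∈ {1,...,n+1} (the row of cells C_n(k,ℓ), k = 1,...,n+1), exactly n − D_n of the n+1 cells yield descent increment +1 and exactly D_n + 1 cells yield increment 0, where D_n is the number of descents of π_n. -/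
/-! Relabelled by `ℓ.succAbove`, `σ` becomes a word `w` of length `n` avoiding the letter
`ℓ`, and inserting into cell `(k, ℓ)` inserts `ℓ` into the `k`-th gap of `w`. This replaces the
adjacent pair `(w_{k-1}, w_k)` by the two pairs `(w_{k-1}, ℓ)`, `(ℓ, w_k)`, so the number of
descents changes by `[ℓ < w_{k-1}] + [w_k < ℓ] - [w_k < w_{k-1}] ∈ {0, 1}`. Summed over the
`n + 1` gaps, each letter of `w` is counted once as lying above or below `ℓ` and each descent of
`w` once, so the total increase is `n - D_n`; hence `n - D_n` gaps give `+1` and the other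
`D_n + 1` give `0`. -/

open Finset

namespace List

variable {α β : Type*}

theorem ofFn_insertNth {n : ℕ} (k : Fin (n + 1)) (x : β) (f : Fin n → β) :
    ofFn (Fin.insertNth k x f) = (ofFn f).insertIdx k x := by
  induction n with
  | zero => simp [Fin.fin_one_eq_zero k, Fin.insertNth_zero']
  | succ n ih =>
    cases k using Fin.cases with
    | zero => simp [Fin.insertNth_zero', ofFn_succ]
    | succ j =>
      rw [← Fin.cons_self_tail f, Fin.insertNth_succ_cons, ofFn_cons, ofFn_cons, ih]
      rfl

theorem headD_insertIdx_succ (l : List β) (k : ℕ) (x a : β) :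
    (l.insertIdx (k + 1) x).headD a = l.headD a := by
  cases l <;> rfl

variable [LinearOrder α]

def descentCount : List α → ℕ
  | a :: b :: l => descentCount (b :: l) + if b < a then 1 else 0
  | _ => 0

theorem descentCount_cons_cons (a b : α) (l : List α) :
    (a :: b :: l).descentCount = (b :: l).descentCount + if b < a then 1 else 0 := rfl

-- With `headD a` an empty tail contributes `if a < a then 1 else 0 = 0`.
theorem descentCount_cons (a : α) (l : List α) :
    (a :: l).descentCount = l.descentCount + if l.headD a < a then 1 else 0 := by
  cases l <;> simp [descentCount]

theorem descentCount_map_of_strictMono [LinearOrder β] {g : α → β} (hg : StrictMono g)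
    (l : List α) : (l.map g).descentCount = l.descentCount := by
  induction l with
  | nil => rfl
  | cons a l ih => cases l <;> simp_all [descentCount_cons, hg.lt_iff_lt]

theorem descentCount_ofFn_succ {m : ℕ} (f : Fin (m + 1) → α) :
    (ofFn f).descentCount = #{i : Fin m | f i.succ < f i.castSucc} := by
  induction m with
  | zero => simp [descentCount]
  | succ m ih =>
    rw [ofFn_succ, descentCount_cons, ih, Fin.card_filter_univ_succ, ofFn_succ, headD_cons]
    simp only [Fin.succ_castSucc, Fin.castSucc_zero]
    split_ifs <;> simp_all [add_comm]

theorem descentCount_ofFn {m : ℕ} (f : Fin m → α) :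
    (ofFn f).descentCount = #{p : Fin m × Fin m | (p.1 : ℕ) + 1 = p.2 ∧ f p.2 < f p.1} := by
  cases m with
  | zero => simp [descentCount]
  | succ m =>
    rw [descentCount_ofFn_succ]
    refine card_bij (fun i _ => (i.castSucc, i.succ)) (by simp) (by simp) ?_
    simp only [Finset.mem_filter, Finset.mem_univ, true_and, and_imp, Prod.forall, Prod.mk.injEq]
    intro a b hab hf
    have hb : (⟨a, by omega⟩ : Fin m).succ = b := Fin.ext hab
    exact ⟨⟨a, by omega⟩, by rwa [hb], rfl, hb⟩

theorem descentCount_insertIdx_mem_Icc (l : List α) (k : ℕ) (x : α) :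
    (l.insertIdx k x).descentCount ∈ Set.Icc l.descentCount (l.descentCount + 1) := by
  rw [Set.mem_Icc]
  induction l generalizing k with
  | nil => cases k <;> simp [descentCount]
  | cons a l ih =>
    rcases k with _ | _ | k
    · rw [insertIdx_zero, descentCount_cons x]
      split_ifs <;> omega
    · rcases l with _ | ⟨b, l⟩
      · simp only [insertIdx_succ_cons, insertIdx_zero, descentCount_cons_cons]
        split_ifs <;> simp [descentCount]
      · rw [insertIdx_succ_cons, insertIdx_zero, descentCount_cons_cons, descentCount_cons_cons,
          descentCount_cons_cons]
        split_ifs <;> (try omega) <;> order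
    · rw [insertIdx_succ_cons, descentCount_cons, descentCount_cons, headD_insertIdx_succ]
      have := ih (k + 1)
      omega

theorem sum_descentCount_insertIdx {l : List α} {x : α} (hx : x ∉ l) :
    ∑ k ∈ Finset.range (l.length + 1), (l.insertIdx k x).descentCount =
      l.length * (l.descentCount + 1) := by
  induction l with
  | nil => simp [descentCount]
  | cons a l ih =>
    rw [mem_cons, not_or] at hx
    rw [length_cons, Finset.sum_range_succ', insertIdx_zero, descentCount_cons_cons]
    simp only [insertIdx_succ_cons, descentCount_cons a, sum_add_distrib, ih hx.2]
    rw [Finset.sum_range_succ', insertIdx_zero, headD_cons]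
    simp only [headD_insertIdx_succ, sum_const, card_range, smul_eq_mul]
    rcases lt_or_gt_of_ne hx.1 with h | h
    · rw [if_pos h, if_neg h.not_gt]; ring
    · rw [if_neg h.not_gt, if_pos h]; ring

end List

theorem Finset.sum_eq_card_mul_add_card_filter_eq_succ {ι : Type*} (s : Finset ι) (f : ι → ℕ)
    (d : ℕ) (h : ∀ i ∈ s, f i = d ∨ f i = d + 1) :
    ∑ i ∈ s, f i = #s * d + #{i ∈ s | f i = d + 1} := by
  rw [card_filter, ← smul_eq_mul, ← sum_const, ← sum_add_distrib]
  refine sum_congr rfl fun i hi => ?_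
  rcases h i hi with h | h <;> simp [h]

theorem descNum_eq_descentCount {n : ℕ} (σ : Equiv.Perm (Fin n)) :
    descNum σ = (List.ofFn σ).descentCount :=
  (List.descentCount_ofFn σ).symm

theorem descentCount_ofFn_succAbove_comp {n : ℕ} (σ : Equiv.Perm (Fin n)) (ℓ : Fin (n + 1)) :
    (List.ofFn (ℓ.succAbove ∘ σ)).descentCount = descNum σ := by
  rw [← List.map_ofFn, List.descentCount_map_of_strictMono (Fin.strictMono_succAbove ℓ),
    descNum_eq_descentCount]

theorem insertPerm_eq_insertNth {n : ℕ} (σ : Equiv.Perm (Fin n)) (k ℓ : Fin (n + 1)) :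
    ⇑(insertPerm σ k ℓ) = Fin.insertNth k ℓ (ℓ.succAbove ∘ σ) := by
  refine (Fin.insertNth_eq_iff.2 ⟨?_, ?_⟩).symm
  · simp [insertPerm]
  · funext j
    simp [Fin.removeNth, insertPerm, finSuccEquiv'_succAbove, finSuccEquiv'_symm_some]

theorem descNum_insertPerm_s12 {n : ℕ} (σ : Equiv.Perm (Fin n)) (k ℓ : Fin (n + 1)) :
    descNum (insertPerm σ k ℓ) =
      ((List.ofFn (ℓ.succAbove ∘ σ)).insertIdx k ℓ).descentCount := by
  rw [descNum_eq_descentCount, insertPerm_eq_insertNth, List.ofFn_insertNth]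

theorem descNum_insertPerm_eq_or_eq_succ {n : ℕ} (σ : Equiv.Perm (Fin n)) (k ℓ : Fin (n + 1)) :
    descNum (insertPerm σ k ℓ) = descNum σ ∨
      descNum (insertPerm σ k ℓ) = descNum σ + 1 := by
  have := (List.ofFn (ℓ.succAbove ∘ σ)).descentCount_insertIdx_mem_Icc k ℓ
  rw [Set.mem_Icc, descentCount_ofFn_succAbove_comp, ← descNum_insertPerm_s12] at this
  omega

theorem sum_descNum_insertPerm {n : ℕ} (σ : Equiv.Perm (Fin n)) (ℓ : Fin (n + 1)) :
    ∑ k : Fin (n + 1), descNum (insertPerm σ k ℓ) = n * (descNum σ + 1) := by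
  set w := List.ofFn (ℓ.succAbove ∘ σ)
  have hℓ : ℓ ∉ w := by simp [w, List.mem_ofFn, Fin.succAbove_ne]
  have := List.sum_descentCount_insertIdx hℓ
  rw [List.length_ofFn, descentCount_ofFn_succAbove_comp] at this
  simp only [descNum_insertPerm_s12]
  rwa [Fin.sum_univ_eq_sum_range fun k => (w.insertIdx k ℓ).descentCount]

/-- In each fiber (row `ℓ` of cells), exactly `n - D_n` of the `n+1` insertion cells
increase the descent count by 1, and exactly `D_n + 1` leave it unchanged. -/
theorem stmt_12 (n : ℕ) (σ : Equiv.Perm (Fin n)) (ℓ : Fin (n + 1)) :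
    ((Finset.univ.filter fun k : Fin (n + 1) =>
        descNum (insertPerm σ k ℓ) = descNum σ + 1).card : ℤ) = (n : ℤ) - descNum σ ∧
    (Finset.univ.filter fun k : Fin (n + 1) =>
        descNum (insertPerm σ k ℓ) = descNum σ).card = descNum σ + 1 := by
  have hstep := fun k => descNum_insertPerm_eq_or_eq_succ σ k ℓ
  have hsum := sum_descNum_insertPerm σ ℓ
  rw [sum_eq_card_mul_add_card_filter_eq_succ _ _ _ fun k _ => hstep k, card_univ,
    Fintype.card_fin] at hsum
  have hcards := card_filter_add_card_filter_not (s := univ)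
    fun k : Fin (n + 1) => descNum (insertPerm σ k ℓ) = descNum σ + 1
  rw [filter_congr fun k _ => ⟨(hstep k).resolve_right, by omega⟩, card_univ,
    Fintype.card_fin] at hcards
  have hcount : #{k | descNum (insertPerm σ k ℓ) = descNum σ + 1} + descNum σ = n := by
    linarith
  omega
end

section
/- For every real t > 0 and every n ≥ 1 and v ∈ [−π/2, π/2], |r_n(t+iv)| ≤ C_t q_t^{n+1}, where q_t = sqrt((t² + (π/2)²)/(t² + (3π/2)²)) < 1 and C_t is independent of n; in particular r_n(t+iv) → 0 exponentially fast uniformly on [−π/2, π/2]. -/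
open Filter

/-!
For `z = t + iv` the `ℓ`-th term of `r_n(z)` has modulus `(|z| / |z + 2πiℓ|)^(n+1)`.
When `|v| ≤ π/2` and `ℓ ≠ 0`, the shifted imaginary part satisfies `|v + 2πℓ| ≥ (3π/2)|ℓ|`, so
the squared ratio is at most `g(ℓ) = (t² + (π/2)²) / (t² + (3π/2)² ℓ²) ≤ q_t²`. Splitting off two
factors, every term is at most `q_t^(n-1) g(ℓ)`, and `g` is summable like `1/ℓ²`.
-/

open Real

noncomputable def rfnRatio (t : ℝ) : ℝ :=
  √((t ^ 2 + (π / 2) ^ 2) / (t ^ 2 + (3 * π / 2) ^ 2))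

noncomputable def rfnMajorant (t : ℝ) (ℓ : ℤ) : ℝ :=
  (t ^ 2 + (π / 2) ^ 2) / (t ^ 2 + (3 * π / 2) ^ 2 * (ℓ : ℝ) ^ 2)

lemma rfnRatio_pos (t : ℝ) : 0 < rfnRatio t := by
  unfold rfnRatio
  have := pi_pos
  positivity

lemma rfnRatio_sq (t : ℝ) :
    rfnRatio t ^ 2 = (t ^ 2 + (π / 2) ^ 2) / (t ^ 2 + (3 * π / 2) ^ 2) :=
  sq_sqrt (by positivity)

lemma rfnRatio_lt_one (t : ℝ) : rfnRatio t < 1 := by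
  have := pi_pos
  rw [rfnRatio, sqrt_lt' one_pos, one_pow, div_lt_one (by positivity)]
  nlinarith

lemma rfnMajorant_nonneg (t : ℝ) (ℓ : ℤ) : 0 ≤ rfnMajorant t ℓ := by
  unfold rfnMajorant
  positivity

lemma rfnMajorant_le_rfnRatio_sq (t : ℝ) {ℓ : ℤ} (hℓ : ℓ ≠ 0) :
    rfnMajorant t ℓ ≤ rfnRatio t ^ 2 := by
  have hℓ1 : (1 : ℝ) ≤ (ℓ : ℝ) ^ 2 := by
    rw [← sq_abs]
    exact one_le_pow₀ (by exact_mod_cast Int.one_le_abs hℓ)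
  rw [rfnRatio_sq, rfnMajorant]
  gcongr
  nlinarith [sq_nonneg (3 * π / 2)]

lemma summable_rfnMajorant (t : ℝ) : Summable (rfnMajorant t) := by
  refine Summable.of_norm_bounded_eventually
    ((summable_one_div_int_pow.mpr one_lt_two).mul_left ((t ^ 2 + (π / 2) ^ 2) / (3 * π / 2) ^ 2))
    ((eventually_cofinite_ne 0).mono fun ℓ hℓ => ?_)
  have hℓ2 : (0 : ℝ) < (ℓ : ℝ) ^ 2 := by positivity
  rw [Real.norm_of_nonneg (rfnMajorant_nonneg t ℓ), rfnMajorant, div_mul_div_comm, mul_one]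
  have := pi_pos
  gcongr
  nlinarith [sq_nonneg t]

lemma norm_inv_one_add_div_pow {z : ℂ} (hz : z ≠ 0) (a : ℂ) (k : ℕ) :
    ‖((1 + a / z) ^ k)⁻¹‖ = (‖z‖ / ‖z + a‖) ^ k := by
  rw [one_add_div hz, norm_inv, norm_pow, norm_div, ← inv_pow, inv_div]

lemma sq_le_sq_add_two_pi_mul {v : ℝ} (hv : |v| ≤ π / 2) (ℓ : ℤ) :
    (3 * π / 2) ^ 2 * (ℓ : ℝ) ^ 2 ≤ (v + 2 * π * ℓ) ^ 2 := by
  rcases eq_or_ne ℓ 0 with rfl | hℓ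
  · simp only [Int.cast_zero]; nlinarith [sq_nonneg v]
  have hℓ1 : (1 : ℝ) ≤ |(ℓ : ℝ)| := by exact_mod_cast Int.one_le_abs hℓ
  have hshift : 2 * π * |(ℓ : ℝ)| ≤ |v + 2 * π * ℓ| + |v| := by
    have := abs_sub (v + 2 * π * ℓ) v
    rwa [add_sub_cancel_left, abs_mul, abs_of_pos two_pi_pos] at this
  have hlin : 3 * π / 2 * |(ℓ : ℝ)| ≤ |v + 2 * π * ℓ| := by
    nlinarith [pi_pos]
  rw [← sq_abs (ℓ : ℝ), ← sq_abs (v + 2 * π * ℓ), ← mul_pow]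
  exact pow_le_pow_left₀ (by positivity) hlin 2

lemma norm_div_norm_add_sq_le {t v : ℝ} (ht : 0 < t) (hv : |v| ≤ π / 2) (ℓ : ℤ) :
    (‖(t + v * Complex.I : ℂ)‖ / ‖t + v * Complex.I + 2 * π * Complex.I * ℓ‖) ^ 2
      ≤ rfnMajorant t ℓ := by
  have hnum : ‖(t + v * Complex.I : ℂ)‖ ^ 2 = t ^ 2 + v ^ 2 := by
    rw [Complex.sq_norm, Complex.normSq_add_mul_I]
  have hden : ‖(t + v * Complex.I + 2 * π * Complex.I * ℓ : ℂ)‖ ^ 2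
      = t ^ 2 + (v + 2 * π * ℓ) ^ 2 := by
    rw [show (t + v * Complex.I + 2 * π * Complex.I * ℓ : ℂ)
        = t + ((v + 2 * π * ℓ : ℝ) : ℂ) * Complex.I by push_cast; ring,
      Complex.sq_norm, Complex.normSq_add_mul_I]
  rw [div_pow, hnum, hden, rfnMajorant]
  have := pi_pos
  refine div_le_div₀ (by positivity) ?_ (by positivity) ?_
  · nlinarith [sq_abs v, abs_nonneg v]
  · linarith [sq_le_sq_add_two_pi_mul hv ℓ]

lemma norm_rfn_term_le {t v : ℝ} (ht : 0 < t) (hv : |v| ≤ π / 2) (n : ℕ) (ℓ : ℤ) :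
    ‖(if ℓ = 0 then 0
        else ((1 + (2 * π * Complex.I * ℓ) / (t + v * Complex.I)) ^ (n + 2))⁻¹ : ℂ)‖
      ≤ rfnRatio t ^ n * rfnMajorant t ℓ := by
  rcases eq_or_ne ℓ 0 with rfl | hℓ
  · simpa using mul_nonneg (pow_nonneg (rfnRatio_pos t).le n) (rfnMajorant_nonneg t 0)
  have hz : (t + v * Complex.I : ℂ) ≠ 0 := fun h => by
    simpa [ht.ne'] using congrArg Complex.re h
  set r := ‖(t + v * Complex.I : ℂ)‖ / ‖t + v * Complex.I + 2 * π * Complex.I * ℓ‖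
  have hr0 : 0 ≤ r := by positivity
  have hr2 : r ^ 2 ≤ rfnMajorant t ℓ := norm_div_norm_add_sq_le ht hv ℓ
  have hrq : r ≤ rfnRatio t :=
    (pow_le_pow_iff_left₀ hr0 (rfnRatio_pos t).le two_ne_zero).mp
      (hr2.trans (rfnMajorant_le_rfnRatio_sq t hℓ))
  rw [if_neg hℓ, norm_inv_one_add_div_pow hz, pow_add]
  exact mul_le_mul (pow_le_pow_left₀ hr0 hrq n) hr2 (by positivity)
    (pow_nonneg (rfnRatio_pos t).le n)

lemma norm_rfn_succ_le {t v : ℝ} (ht : 0 < t) (hv : |v| ≤ π / 2) (n : ℕ) :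
    ‖rfn (n + 1) (t + v * Complex.I)‖ ≤ rfnRatio t ^ n * ∑' ℓ, rfnMajorant t ℓ :=
  tsum_of_norm_bounded ((summable_rfnMajorant t).hasSum.mul_left _)
    (norm_rfn_term_le ht hv n)

theorem stmt_19 (t : ℝ) (ht : 0 < t) :
    Real.sqrt ((t ^ 2 + (Real.pi / 2) ^ 2) / (t ^ 2 + (3 * Real.pi / 2) ^ 2)) < 1 ∧
    ∃ C : ℝ, (∀ n : ℕ, 1 ≤ n → ∀ v ∈ Set.Icc (-(Real.pi / 2)) (Real.pi / 2),
        ‖rfn n (t + v * Complex.I)‖ ≤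
          C * Real.sqrt ((t ^ 2 + (Real.pi / 2) ^ 2) /
              (t ^ 2 + (3 * Real.pi / 2) ^ 2)) ^ (n + 1)) ∧
      ∀ v ∈ Set.Icc (-(Real.pi / 2)) (Real.pi / 2),
        Tendsto (fun n : ℕ => ‖rfn n (t + v * Complex.I)‖) atTop (nhds 0) := by
  change rfnRatio t < 1 ∧ ∃ C : ℝ, (∀ n : ℕ, 1 ≤ n → ∀ v ∈ Set.Icc (-(π / 2)) (π / 2),
      ‖rfn n (t + v * Complex.I)‖ ≤ C * rfnRatio t ^ (n + 1)) ∧ _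
  have hq := rfnRatio_pos t
  set q := rfnRatio t
  set S := ∑' ℓ, rfnMajorant t ℓ
  refine ⟨rfnRatio_lt_one t, S / q ^ 2, fun n hn v hv => ?_, fun v hv => ?_⟩
  · obtain ⟨m, rfl⟩ := Nat.exists_eq_add_of_le' hn
    calc ‖rfn (m + 1) (t + v * Complex.I)‖ ≤ q ^ m * S := norm_rfn_succ_le ht (abs_le.mpr hv) m
      _ = S / q ^ 2 * q ^ (m + 1 + 1) := by field_simp; ring
  · rw [← tendsto_add_atTop_iff_nat 1]
    have hlim := (tendsto_pow_atTop_nhds_zero_of_lt_one hq.le (rfnRatio_lt_one t)).mul_const S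
    rw [zero_mul] at hlim
    exact squeeze_zero (fun _ => norm_nonneg _)
      (fun n => norm_rfn_succ_le ht (abs_le.mpr hv) n) hlim
end
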